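/- arXiv:2103.11724 — 4 statements merged into one kernel-verified Lean document; each statement's English description precedes it below -/
import Mathlib

section
/- For any measurable f : ℝ² → ℝ with 0 ≤ f ≤ 1, ‖f‖_{L¹} = π, and ∫ |x|² f dx < ∞, one has ∫_{ℝ²} |x|² f(x) dx ≥ ∫_{D} |x|² dx = π/2. -/
/-!
Bathtub principle: among densities `0 ≤ f ≤ 1` of prescribed mass, `∫ w f` is minimised by the
indicator of a sublevel set `s = {w < t}` of that mass, because `(w - t) (f - 𝟙_s) ≥ 0` pointwise
and integrating gives `∫ w f - ∫_s w ≥ t (∫ f - |s|) = 0`. For `w = |x|²` and mass `π` this set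
is the unit disk, whose moment is `∫_D |x|² = 2/(2 + 2) · |D| = π/2` by polar coordinates.
-/

open MeasureTheory

noncomputable abbrev E2 : Type := EuclideanSpace ℝ (Fin 2)

open Metric Set

theorem setIntegral_ball_norm_pow {E : Type*} [NormedAddCommGroup E] [NormedSpace ℝ E]
    [FiniteDimensional ℝ E] [MeasurableSpace E] [BorelSpace E] [Nontrivial E]
    (μ : Measure E) [μ.IsAddHaarMeasure] (p : ℕ) :
    ∫ x in ball (0 : E) 1, ‖x‖ ^ p ∂μ =
      Module.finrank ℝ E / (Module.finrank ℝ E + p) * μ.real (ball 0 1) := by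
  set n := Module.finrank ℝ E
  have hn : 0 < n := Module.finrank_pos
  have hradial :
      (ball (0 : E) 1).indicator (‖·‖ ^ p) = fun x => (Iio 1).indicator (· ^ p) ‖x‖ := by
    ext x; by_cases hx : ‖x‖ < 1 <;> simp [hx]
  have hprofile : ∫ y in Ioi (0 : ℝ), y ^ (n - 1) • (Iio 1).indicator (· ^ p) y =
      ∫ y in (0 : ℝ)..1, y ^ (n - 1 + p) := by
    rw [intervalIntegral.integral_of_le zero_le_one, integral_Ioc_eq_integral_Ioo, ← Ioi_inter_Iio,
      ← setIntegral_indicator measurableSet_Iio]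
    refine setIntegral_congr_fun measurableSet_Ioi fun y _ => ?_
    by_cases hy : y < 1 <;> simp [hy, pow_add]
  rw [← integral_indicator measurableSet_ball, hradial, integral_fun_norm_addHaar, hprofile,
    integral_pow]
  have hexponent : ((n - 1 + p : ℕ) : ℝ) + 1 = n + p := by push_cast [Nat.cast_sub hn]; ring
  simp only [hexponent, nsmul_eq_mul, smul_eq_mul, one_pow, ne_eq, Nat.add_eq_zero_iff,
    one_ne_zero, and_false, not_false_eq_true, zero_pow, sub_zero, one_div, n]
  ring

theorem setIntegral_le_integral_mul_of_integral_eq_measureReal {α : Type*} [MeasurableSpace α]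
    {μ : Measure α} {w f : α → ℝ} {s : Set α} {t : ℝ} (hs : MeasurableSet s) (hμs : μ s ≠ ⊤)
    (hw_on : ∀ x ∈ s, w x ≤ t) (hw_off : ∀ x ∉ s, t ≤ w x)
    (hf : ∀ᵐ x ∂μ, 0 ≤ f x ∧ f x ≤ 1) (hfi : Integrable f μ)
    (hwf : Integrable (fun x => w x * f x) μ) (hws : IntegrableOn w s μ)
    (hmass : ∫ x, f x ∂μ = μ.real s) :
    ∫ x in s, w x ∂μ ≤ ∫ x, w x * f x ∂μ := by
  have hs1 : Integrable (s.indicator fun _ => (1 : ℝ)) μ :=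
    (integrable_indicator_iff hs).2 (integrableOn_const hμs)
  -- `(w - t) (f - 𝟙_s) ≥ 0`, rearranged
  have hpointwise : ∀ᵐ x ∂μ,
      t * (f x - s.indicator (fun _ => 1) x) ≤ w x * f x - s.indicator w x := by
    filter_upwards [hf] with x ⟨hf0, hf1⟩
    by_cases hx : x ∈ s
    · simp only [indicator_of_mem hx]
      nlinarith [hw_on x hx]
    · simp only [indicator_of_notMem hx, sub_zero]
      exact mul_le_mul_of_nonneg_right (hw_off x hx) hf0
  have hmono := integral_mono_ae ((hfi.sub hs1).const_mul t)
    (hwf.sub (hws.integrable_indicator hs)) hpointwise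
  rw [integral_const_mul, integral_sub' hfi hs1, integral_sub' hwf (hws.integrable_indicator hs),
    integral_indicator hs, integral_indicator hs, setIntegral_const, smul_eq_mul, mul_one,
    hmass] at hmono
  linarith

theorem impulse_lower_bound_general
    (f : E2 → ℝ)
    (hbound : ∀ᵐ x : E2, 0 ≤ f x ∧ f x ≤ 1)
    (hint : Integrable f)
    (hmass : ∫ x : E2, f x = Real.pi)
    (hJ : Integrable (fun x : E2 => ‖x‖ ^ 2 * f x)) :
    Real.pi / 2 ≤ ∫ x : E2, ‖x‖ ^ 2 * f x := by
  have hdisk_area : volume.real (ball (0 : E2) 1) = Real.pi := by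
    simp [measureReal_def, Real.pi_nonneg]
  have hdisk_moment : ∫ x in ball (0 : E2) 1, ‖x‖ ^ 2 = Real.pi / 2 := by
    rw [setIntegral_ball_norm_pow, hdisk_area, finrank_euclideanSpace_fin]
    ring
  have hnorm_sq_int : IntegrableOn (fun x : E2 => ‖x‖ ^ 2) (ball 0 1) :=
    ((Continuous.continuousOn (by fun_prop)).integrableOn_compact
      (isCompact_closedBall 0 1)).mono_set ball_subset_closedBall
  rw [← hdisk_moment]
  refine setIntegral_le_integral_mul_of_integral_eq_measureReal (t := 1) measurableSet_ball
    measure_ball_lt_top.ne (fun x hx => ?_) (fun x hx => ?_) hbound hint hJ hnorm_sq_int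
    (hmass.trans hdisk_area.symm)
  · simpa using (mem_ball_zero_iff.1 hx).le
  · simpa using hx

/-- the angular impulse of any `0 ≤ f ≤ 1` with mass `π` is at
least `π/2 = ∫_D |x|² dx`. -/
theorem impulse_lower_bound
    (f : E2 → ℝ) (hmeas : Measurable f)
    (hbound : ∀ᵐ x : E2, 0 ≤ f x ∧ f x ≤ 1)
    (hint : Integrable f)
    (hmass : ∫ x : E2, f x = Real.pi)
    (hJ : Integrable (fun x : E2 => ‖x‖ ^ 2 * f x)) :
    Real.pi / 2 ≤ ∫ x : E2, ‖x‖ ^ 2 * f x :=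
  impulse_lower_bound_general f hbound hint hmass hJ
end

section
/- Let 0 ≤ s₂ ≤ s₁ and 0 < k/n ≤ 1. Define c = √((1 - k/n) s₂² + (k/n) s₁²). Then the function h = (k/n)·1_{{s₂ ≤ |x| < s₁}} and the function h' = 1_{{s₂ ≤ |x| < c}} have equal L¹ norms, and J(h) - J(h') = (πk/(2n))(1 - k/n)(s₁² - s₂²)² ≥ 0, where J(f) = ∫_{ℝ²} |x|² f(x) dx. -/
/-!
In polar coordinates the annulus `a ≤ |x| < b` in `ℝ²` has mass `π (b² - a²)` and impulse
`π (b⁴ - a⁴) / 2`. The radius `c` is chosen so that `c² - s₂² = (k/n) (s₁² - s₂²)`, which equalises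
the masses; with `t = k/n`, `u = s₁²`, `v = s₂²` the impulse difference is then
`π/2 · (t (u² - v²) - ((v + t (u - v))² - v²)) = π/2 · t (1 - t) (u - v)²`.
-/

open MeasureTheory

open Set Metric Module

theorem integral_Ioi_pow_smul_indicator_Ico_pow {a b : ℝ} (ha : 0 ≤ a) (hab : a ≤ b)
    (d m : ℕ) :
    ∫ y in Ioi (0 : ℝ), y ^ d • (Ico a b).indicator (fun r => r ^ m) y
      = (b ^ (m + d + 1) - a ^ (m + d + 1)) / (m + d + 1) := by
  have hpow : (fun y : ℝ => y ^ d • (Ico a b).indicator (fun r => r ^ m) y)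
      = (Ico a b).indicator (fun y => y ^ (m + d)) := by
    ext y
    rw [← indicator_smul_apply _ (fun y => y ^ d)]
    simp only [smul_eq_mul, ← pow_add, add_comm d m]
  have hIoc : Ioc a b ⊆ Ioi 0 := Ioc_subset_Ioi_self.trans (Ioi_subset_Ioi ha)
  calc ∫ y in Ioi (0 : ℝ), y ^ d • (Ico a b).indicator (fun r => r ^ m) y
      = ∫ y in Ioi (0 : ℝ), (Ioc a b).indicator (fun y => y ^ (m + d)) y := by
        rw [hpow]
        exact integral_congr_ae (ae_restrict_of_ae (indicator_ae_eq_of_ae_eq_set Ico_ae_eq_Ioc))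
    _ = ∫ y in a..b, y ^ (m + d) := by
        rw [setIntegral_indicator measurableSet_Ioc, inter_eq_right.mpr hIoc,
          intervalIntegral.integral_of_le hab]
    _ = (b ^ (m + d + 1) - a ^ (m + d + 1)) / (m + d + 1) := by
        rw [integral_pow]; push_cast; rfl

theorem integral_norm_pow_mul_indicator_annulus {E : Type*} [NormedAddCommGroup E]
    [NormedSpace ℝ E] [FiniteDimensional ℝ E] [Nontrivial E] [MeasurableSpace E] [BorelSpace E]
    (μ : Measure E) [μ.IsAddHaarMeasure] {a b : ℝ} (ha : 0 ≤ a) (hab : a ≤ b) (m : ℕ) :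
    ∫ x, ‖x‖ ^ m * {x : E | a ≤ ‖x‖ ∧ ‖x‖ < b}.indicator (fun _ => (1 : ℝ)) x ∂μ
      = finrank ℝ E * μ.real (ball 0 1)
          * ((b ^ (m + finrank ℝ E) - a ^ (m + finrank ℝ E)) / (m + finrank ℝ E)) := by
  have hradial :
      (fun x : E => ‖x‖ ^ m * {x : E | a ≤ ‖x‖ ∧ ‖x‖ < b}.indicator (fun _ => (1 : ℝ)) x)
        = fun x => (Ico a b).indicator (fun r => r ^ m) ‖x‖ := by
    ext x
    simp only [indicator_apply, mem_ofPred_eq, mem_Ico, mul_ite, mul_one, mul_zero]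
  have hdim : finrank ℝ E - 1 + 1 = finrank ℝ E := Nat.sub_add_cancel finrank_pos
  rw [hradial, integral_fun_norm_addHaar, integral_Ioi_pow_smul_indicator_Ico_pow ha hab,
    add_assoc, hdim, nsmul_eq_mul, smul_eq_mul]
  push_cast [Nat.cast_sub (finrank_pos (R := ℝ) (M := E))]
  ring

theorem integral_norm_pow_mul_indicator_annulus_fin_two {a b : ℝ} (ha : 0 ≤ a) (hab : a ≤ b)
    (m : ℕ) :
    ∫ x : E2, ‖x‖ ^ m * {x : E2 | a ≤ ‖x‖ ∧ ‖x‖ < b}.indicator (fun _ => (1 : ℝ)) x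
      = 2 * Real.pi * ((b ^ (m + 2) - a ^ (m + 2)) / (m + 2)) := by
  rw [integral_norm_pow_mul_indicator_annulus volume ha hab, finrank_euclideanSpace_fin,
    measureReal_def, EuclideanSpace.volume_ball_fin_two]
  simp [Real.pi_nonneg]

theorem integral_indicator_annulus_fin_two {a b : ℝ} (ha : 0 ≤ a) (hab : a ≤ b) :
    ∫ x : E2, {x : E2 | a ≤ ‖x‖ ∧ ‖x‖ < b}.indicator (fun _ => (1 : ℝ)) x
      = Real.pi * (b ^ 2 - a ^ 2) := by
  have hm := integral_norm_pow_mul_indicator_annulus_fin_two ha hab 0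
  simp only [pow_zero, one_mul] at hm
  rw [hm]
  ring

theorem integral_norm_sq_mul_indicator_annulus_fin_two {a b : ℝ} (ha : 0 ≤ a) (hab : a ≤ b) :
    ∫ x : E2, ‖x‖ ^ 2 * {x : E2 | a ≤ ‖x‖ ∧ ‖x‖ < b}.indicator (fun _ => (1 : ℝ)) x
      = Real.pi / 2 * (b ^ 4 - a ^ 4) := by
  rw [integral_norm_pow_mul_indicator_annulus_fin_two ha hab 2]
  ring

/-- replacing `(k/n)·1_{{s₂ ≤ |x| < s₁}}` by the indicator of a
thinner annulus of the same mass and inner radius decreases the impulse by the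
explicit amount `(πk/(2n))(1 - k/n)(s₁² - s₂²)²`. -/
theorem annulus_flattening
    (s₁ s₂ k n : ℝ) (hs₂ : 0 ≤ s₂) (hs : s₂ ≤ s₁)
    (hkn0 : 0 < k / n) (hkn1 : k / n ≤ 1)
    (c : ℝ) (hc : c = Real.sqrt ((1 - k / n) * s₂ ^ 2 + (k / n) * s₁ ^ 2))
    (h h' : E2 → ℝ)
    (hh : h = fun x => (k / n) *
      ({x : E2 | s₂ ≤ ‖x‖ ∧ ‖x‖ < s₁}.indicator (fun _ => (1 : ℝ)) x))
    (hh' : h' = ({x : E2 | s₂ ≤ ‖x‖ ∧ ‖x‖ < c}.indicator (fun _ => (1 : ℝ)))) :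
    (∫ x : E2, h x) = ∫ x : E2, h' x ∧
    (∫ x : E2, ‖x‖ ^ 2 * h x) - (∫ x : E2, ‖x‖ ^ 2 * h' x)
      = (Real.pi * k / (2 * n)) * (1 - k / n) * (s₁ ^ 2 - s₂ ^ 2) ^ 2 ∧
    0 ≤ (∫ x : E2, ‖x‖ ^ 2 * h x) - (∫ x : E2, ‖x‖ ^ 2 * h' x) := by
  subst hh hh'
  have hsq : s₂ ^ 2 ≤ s₁ ^ 2 := pow_le_pow_left₀ hs₂ hs 2
  have hc_sq : c ^ 2 = (1 - k / n) * s₂ ^ 2 + (k / n) * s₁ ^ 2 := by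
    rw [hc, Real.sq_sqrt]
    nlinarith
  have hs₂c : s₂ ≤ c := by
    rw [hc, Real.le_sqrt hs₂ (by nlinarith)]
    nlinarith
  simp only [mul_left_comm _ (k / n), integral_const_mul,
    integral_indicator_annulus_fin_two hs₂ hs, integral_indicator_annulus_fin_two hs₂ hs₂c,
    integral_norm_sq_mul_indicator_annulus_fin_two hs₂ hs,
    integral_norm_sq_mul_indicator_annulus_fin_two hs₂ hs₂c]
  have hdiff : k / n * (Real.pi / 2 * (s₁ ^ 4 - s₂ ^ 4)) - Real.pi / 2 * (c ^ 4 - s₂ ^ 4)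
      = Real.pi * k / (2 * n) * (1 - k / n) * (s₁ ^ 2 - s₂ ^ 2) ^ 2 := by
    rw [show c ^ 4 = (c ^ 2) ^ 2 by ring, hc_sq]
    ring
  refine ⟨by rw [hc_sq]; ring, hdiff, hdiff ▸ ?_⟩
  rw [show Real.pi * k / (2 * n) = Real.pi / 2 * (k / n) by ring]
  have h1t : 0 ≤ 1 - k / n := sub_nonneg.mpr hkn1
  positivity
end

section
/- Let A ⊂ ℝ² be measurable with |A| = π s² for some s ≥ 0, and let B_s be the disk of radius s centered at the origin. Then ∫_{A \ B_s} |x|² dx − ∫_{B_s \ A} |x|² dx ≥ β²/π, where β = |A \ B_s| = |B_s \ A| = (1/2)|A △ B_s|. -/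
open MeasureTheory

/-!
Outside `B_s`, the set `A \ B_s` of area `β` carries at least as much `∫ |x|²` as the annulus
`s ≤ |x| < r` of the same area, since the latter is a sublevel set of `|x|²` among sets avoiding
`B_s` (bathtub principle); inside `B_s`, dually, `B_s \ A` carries at most as much as the annulus
`ρ ≤ |x| < s` of area `β`. With `π (r² - s²) = β = π (s² - ρ²)` the two annuli give
`β s² ± β² / (2π)`, and their difference is `β² / π`.
-/

open Real Set Metric

theorem setIntegral_le_setIntegral_of_measure_eq {α : Type*} [MeasurableSpace α] {μ : Measure α}
    {f : α → ℝ} {S T : Set α} (hS : MeasurableSet S) (hT : MeasurableSet T)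
    (hμ : μ S = μ T) (hfin : μ S ≠ ⊤) (c : ℝ) (hST : ∀ x ∈ S \ T, c ≤ f x)
    (hTS : ∀ x ∈ T \ S, f x ≤ c) (hfS : IntegrableOn f S μ) (hfT : IntegrableOn f T μ) :
    ∫ x in T, f x ∂μ ≤ ∫ x in S, f x ∂μ := by
  have hdiff : μ (S \ T) = μ (T \ S) :=
    measure_sdiff_symm hS.nullMeasurableSet hT.nullMeasurableSet hμ
      (measure_ne_top_of_subset inter_subset_left hfin)
  have hfin' : μ (T \ S) ≠ ⊤ := hdiff ▸ measure_ne_top_of_subset sdiff_subset hfin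
  rw [← integral_inter_add_sdiff hS hfT, ← integral_inter_add_sdiff hT hfS, inter_comm]
  refine add_le_add_right ?_ _
  calc ∫ x in T \ S, f x ∂μ ≤ ∫ x in T \ S, c ∂μ :=
        setIntegral_mono_on (hfT.mono_set sdiff_subset) (integrableOn_const hfin') (hT.diff hS) hTS
    _ = c * μ.real (S \ T) := by
        rw [setIntegral_const, smul_eq_mul, mul_comm, measureReal_def, measureReal_def, hdiff]
    _ ≤ ∫ x in S \ T, f x ∂μ :=
        setIntegral_ge_of_const_le_real (hS.diff hT) (hdiff ▸ hfin') hST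
          (hfS.mono_set sdiff_subset)

theorem measureReal_ball_fin_two (r : ℝ) (hr : 0 ≤ r) :
    volume.real (ball (0 : E2) r) = π * r ^ 2 := by
  simp [measureReal_def, hr, pi_nonneg, mul_comm]

theorem integrableOn_norm_sq_ball {E : Type*} [NormedAddCommGroup E] [ProperSpace E]
    [MeasurableSpace E] [OpensMeasurableSpace E] {μ : Measure E} [IsFiniteMeasureOnCompacts μ]
    (r : ℝ) : IntegrableOn (fun x : E => ‖x‖ ^ 2) (ball 0 r) μ :=
  ((continuous_norm.pow 2).continuousOn.integrableOn_compact (isCompact_closedBall 0 r)).mono_set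
    ball_subset_closedBall

theorem setIntegral_norm_sq_ball (r : ℝ) (hr : 0 ≤ r) :
    ∫ x in ball (0 : E2) r, ‖x‖ ^ 2 = π * r ^ 4 / 2 := by
  -- polar coordinates: `∫ f ‖x‖ dx = 2 |B₁| ∫₀^∞ t f t dt` in the plane
  have hpolar := integral_fun_norm_addHaar (volume : Measure E2) ((Iio r).indicator fun y => y ^ 2)
  have hradial : ∫ x : E2, (Iio r).indicator (fun y => y ^ 2) ‖x‖ =
      ∫ x in ball (0 : E2) r, ‖x‖ ^ 2 := by
    rw [← integral_indicator measurableSet_ball]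
    congr 1
    ext x
    by_cases hx : ‖x‖ < r <;> simp [hx]
  have hdim : Module.finrank ℝ E2 = 2 := finrank_euclideanSpace_fin
  rw [hradial, hdim] at hpolar
  simp only [smul_eq_mul, ← indicator_mul_right _ fun y : ℝ => y ^ (2 - 1)] at hpolar
  rw [hpolar, setIntegral_indicator measurableSet_Iio, Ioi_inter_Iio,
    ← integral_Ioc_eq_integral_Ioo, ← intervalIntegral.integral_of_le hr,
    measureReal_ball_fin_two 1 zero_le_one]
  simp only [← pow_add, integral_pow]
  norm_num
  ring

theorem measureReal_ball_sdiff_ball {ρ r : ℝ} (hρ : 0 ≤ ρ) (hρr : ρ ≤ r) :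
    volume.real (ball (0 : E2) r \ ball 0 ρ) = π * (r ^ 2 - ρ ^ 2) := by
  rw [measureReal_sdiff (ball_subset_ball hρr) measurableSet_ball,
    measureReal_ball_fin_two r (hρ.trans hρr), measureReal_ball_fin_two ρ hρ]
  ring

theorem setIntegral_norm_sq_ball_sdiff_ball {ρ r : ℝ} (hρ : 0 ≤ ρ) (hρr : ρ ≤ r) :
    ∫ x in ball (0 : E2) r \ ball 0 ρ, ‖x‖ ^ 2 = π * (r ^ 4 - ρ ^ 4) / 2 := by
  rw [setIntegral_sdiff measurableSet_ball (integrableOn_norm_sq_ball r) (ball_subset_ball hρr),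
    setIntegral_norm_sq_ball r (hρ.trans hρr), setIntegral_norm_sq_ball ρ hρ]
  ring

theorem le_setIntegral_norm_sq_of_disjoint_ball {S : Set E2} {s : ℝ} (hs : 0 ≤ s)
    (hS : MeasurableSet S) (hSs : Disjoint S (ball 0 s)) (hSfin : volume S ≠ ⊤)
    (hint : IntegrableOn (fun x : E2 => ‖x‖ ^ 2) S) :
    volume.real S * s ^ 2 + volume.real S ^ 2 / (2 * π) ≤ ∫ x in S, ‖x‖ ^ 2 := by
  set β := volume.real S
  set r := √(s ^ 2 + β / π)
  have hr : r ^ 2 = s ^ 2 + β / π := sq_sqrt (by positivity)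
  have hsr : s ≤ r := le_sqrt_of_sq_le (by simp only [le_add_iff_nonneg_right]; positivity)
  have hvol : volume.real (ball (0 : E2) r \ ball 0 s) = β := by
    rw [measureReal_ball_sdiff_ball hs hsr, hr]
    field_simp
    ring
  have hintegral :
      ∫ x in ball (0 : E2) r \ ball 0 s, ‖x‖ ^ 2 = β * s ^ 2 + β ^ 2 / (2 * π) := by
    rw [setIntegral_norm_sq_ball_sdiff_ball hs hsr, show r ^ 4 = (r ^ 2) ^ 2 by ring, hr]
    field_simp
    ring
  rw [← hintegral]
  refine setIntegral_le_setIntegral_of_measure_eq hS (measurableSet_ball.diff measurableSet_ball)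
    ?_ hSfin (r ^ 2) ?_ ?_ hint ((integrableOn_norm_sq_ball r).mono_set sdiff_subset)
  · exact (ENNReal.toReal_eq_toReal_iff' hSfin
      (measure_ne_top_of_subset sdiff_subset measure_ball_lt_top.ne)).mp hvol.symm
  · rintro x ⟨hxS, hxr⟩
    have hxs : x ∉ ball 0 s := hSs.notMem_of_mem_left hxS
    have : r ≤ ‖x‖ := by simpa [mem_ball_zero_iff, hxs] using hxr
    exact pow_le_pow_left₀ (by positivity) this 2
  · rintro x ⟨⟨hxr, -⟩, -⟩
    exact pow_le_pow_left₀ (norm_nonneg x) (mem_ball_zero_iff.mp hxr).le 2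

theorem setIntegral_norm_sq_le_of_subset_ball {S : Set E2} {s : ℝ} (hs : 0 ≤ s)
    (hS : MeasurableSet S) (hSs : S ⊆ ball 0 s) :
    ∫ x in S, ‖x‖ ^ 2 ≤ volume.real S * s ^ 2 - volume.real S ^ 2 / (2 * π) := by
  set β := volume.real S
  have hβ : β / π ≤ s ^ 2 := by
    rw [div_le_iff₀ pi_pos, mul_comm, ← measureReal_ball_fin_two s hs]
    exact measureReal_mono hSs
  set ρ := √(s ^ 2 - β / π)
  have hρ : ρ ^ 2 = s ^ 2 - β / π := sq_sqrt (by linarith)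
  have hρs : ρ ≤ s := (sqrt_le_left hs).mpr (by simp only [sub_le_self_iff]; positivity)
  have hvol : volume.real (ball (0 : E2) s \ ball 0 ρ) = β := by
    rw [measureReal_ball_sdiff_ball (sqrt_nonneg _) hρs, hρ]
    field_simp
    ring
  have hintegral :
      ∫ x in ball (0 : E2) s \ ball 0 ρ, ‖x‖ ^ 2 = β * s ^ 2 - β ^ 2 / (2 * π) := by
    rw [setIntegral_norm_sq_ball_sdiff_ball (sqrt_nonneg _) hρs,
      show ρ ^ 4 = (ρ ^ 2) ^ 2 by ring, hρ]
    field_simp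
    ring
  have hfin : volume (ball (0 : E2) s \ ball 0 ρ) ≠ ⊤ :=
    measure_ne_top_of_subset sdiff_subset measure_ball_lt_top.ne
  rw [← hintegral]
  refine setIntegral_le_setIntegral_of_measure_eq (measurableSet_ball.diff measurableSet_ball) hS
    ?_ hfin (ρ ^ 2) ?_ ?_ ((integrableOn_norm_sq_ball s).mono_set sdiff_subset)
    ((integrableOn_norm_sq_ball s).mono_set hSs)
  · exact (ENNReal.toReal_eq_toReal_iff' hfin
      (measure_ne_top_of_subset hSs measure_ball_lt_top.ne)).mp hvol
  · rintro x ⟨⟨-, hxρ⟩, -⟩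
    have : ρ ≤ ‖x‖ := by simpa [mem_ball_zero_iff] using hxρ
    exact pow_le_pow_left₀ (sqrt_nonneg _) this 2
  · rintro x ⟨hxS, hxI⟩
    have : ‖x‖ < ρ := by simpa [mem_ball_zero_iff, hSs hxS] using hxI
    exact pow_le_pow_left₀ (norm_nonneg x) this.le 2

/-- if `|A| = π s²` then the impulse excess of `A` over the disk
`B_s` is at least `β²/π` with `β = |A \ B_s| = |B_s \ A|`. -/
theorem impulse_excess_lower_bound
    (A : Set E2) (hA : MeasurableSet A) (s : ℝ) (hs : 0 ≤ s)
    (hvol : volume A = ENNReal.ofReal (Real.pi * s ^ 2))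
    (hint : IntegrableOn (fun x : E2 => ‖x‖ ^ 2) (A \ Metric.ball (0 : E2) s))
    (β : ℝ) (hβ : β = (volume (A \ Metric.ball (0 : E2) s)).toReal) :
    volume (A \ Metric.ball (0 : E2) s) = volume (Metric.ball (0 : E2) s \ A) ∧
    β = (volume (symmDiff A (Metric.ball (0 : E2) s))).toReal / 2 ∧
    β ^ 2 / Real.pi ≤
      (∫ x in A \ Metric.ball (0 : E2) s, ‖x‖ ^ 2)
        - ∫ x in Metric.ball (0 : E2) s \ A, ‖x‖ ^ 2 := by
  have hAfin : volume A ≠ ⊤ := hvol ▸ ENNReal.ofReal_ne_top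
  have hvolB : volume (ball (0 : E2) s) = ENNReal.ofReal (π * s ^ 2) := by
    rw [EuclideanSpace.volume_ball_fin_two, ← ENNReal.ofReal_pow hs,
      ← ENNReal.ofReal_mul (by positivity), mul_comm]
  have hdiff : volume (A \ ball 0 s) = volume (ball 0 s \ A) :=
    measure_sdiff_symm hA.nullMeasurableSet measurableSet_ball.nullMeasurableSet
      (hvol.trans hvolB.symm) (measure_ne_top_of_subset inter_subset_left hAfin)
  have hfin : volume (A \ ball 0 s) ≠ ⊤ := measure_ne_top_of_subset sdiff_subset hAfin
  refine ⟨hdiff, ?_, ?_⟩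
  · rw [Set.symmDiff_def, measure_union disjoint_sdiff_sdiff (measurableSet_ball.diff hA),
      ← hdiff, ENNReal.toReal_add hfin hfin, hβ]
    ring
  · have houter := le_setIntegral_norm_sq_of_disjoint_ball hs (hA.diff measurableSet_ball)
      disjoint_sdiff_left hfin hint
    have hinner :=
      setIntegral_norm_sq_le_of_subset_ball hs (measurableSet_ball.diff hA) sdiff_subset
    rw [measureReal_def, ← hβ] at houter
    rw [measureReal_def, ← hdiff, ← hβ] at hinner
    linarith [show β ^ 2 / π = 2 * (β ^ 2 / (2 * π)) by ring]
end

section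
/- Let A ⊂ ℝ² be a measurable set of finite measure and let A* = B_s be the disk centered at the origin with |B_s| = |A|. Then ∫_A |x|² dx − ∫_{A*} |x|² dx ≥ (1/(4π)) ‖1_A − 1_{A*}‖_{L¹}² , i.e. the excess angular impulse of A over its symmetric rearrangement controls the square of the L¹ distance between the indicator functions. -/
/-! With `B` the disk and `m = |A \ B| = |B \ A|`, the excess splits as
`∫_{A \ B} (|x|² - s²) + ∫_{B \ A} (s² - |x|²)`, two integrals of nonnegative functions.
Each is at least `m² / (2π)` by the layer-cake formula: where such an integrand is `≤ t`, `|x|²`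
lies in an interval of length `t`, i.e. `x` lies in an annulus of area `πt`, so the superlevel set
at height `t` has measure at least `m - πt`. Finally `m² / π = (2m)² / (4π)`. -/

open MeasureTheory

open Set Metric Real

theorem ENNReal.ofReal_sub_ofReal_le (p q : ℝ) :
    ENNReal.ofReal p - ENNReal.ofReal q ≤ ENNReal.ofReal (p - q) :=
  tsub_le_iff_right.2 (by simpa using ENNReal.ofReal_add_le (p := p - q) (q := q))

theorem EuclideanSpace.volume_ball_fin_two_sqrt (r : ℝ) :
    volume (ball (0 : E2) √r) = ENNReal.ofReal (π * r) := by
  rcases le_or_gt 0 r with hr | hr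
  · rw [EuclideanSpace.volume_ball_fin_two, ← ENNReal.ofReal_pow (sqrt_nonneg r), sq_sqrt hr,
      ← ENNReal.ofReal_mul hr, mul_comm]
  · simp [sqrt_eq_zero'.2 hr.le,
      ENNReal.ofReal_of_nonpos (mul_nonpos_of_nonneg_of_nonpos pi_pos.le hr.le)]

theorem EuclideanSpace.volume_sq_norm_mem_Icc_le (a b : ℝ) :
    volume {x : E2 | ‖x‖ ^ 2 ∈ Icc a b} ≤ ENNReal.ofReal (π * (b - a)) := by
  rcases lt_or_ge b a with hba | hab
  · simp [Icc_eq_empty_of_lt hba]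
  have hsub : {x : E2 | ‖x‖ ^ 2 ∈ Icc a b} ⊆ closedBall 0 √b \ ball 0 √a := by
    rintro x ⟨hax, hxb⟩
    simp only [mem_sdiff, mem_closedBall, mem_ball, dist_zero_right, not_lt]
    exact ⟨le_sqrt_of_sq_le hxb, (sqrt_le_left (norm_nonneg x)).2 hax⟩
  calc volume {x : E2 | ‖x‖ ^ 2 ∈ Icc a b}
      ≤ volume (closedBall (0 : E2) √b \ ball 0 √a) := measure_mono hsub
    _ = ENNReal.ofReal (π * b) - ENNReal.ofReal (π * a) := by
      rw [measure_sdiff (ball_subset_closedBall.trans (closedBall_subset_closedBall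
          (sqrt_le_sqrt hab))) measurableSet_ball.nullMeasurableSet measure_ball_lt_top.ne,
        Measure.addHaar_closedBall_eq_addHaar_ball, EuclideanSpace.volume_ball_fin_two_sqrt,
        EuclideanSpace.volume_ball_fin_two_sqrt]
    _ ≤ ENNReal.ofReal (π * (b - a)) := mul_sub π b a ▸ ENNReal.ofReal_sub_ofReal_le _ _

theorem ofReal_sq_div_le_lintegral_ofReal_sub_mul {m k : ℝ} (hm : 0 ≤ m) (hk : 0 < k) :
    ENNReal.ofReal (m ^ 2 / (2 * k)) ≤ ∫⁻ t in Ioi 0, ENNReal.ofReal (m - k * t) := by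
  have hmk : 0 ≤ m / k := div_nonneg hm hk.le
  have hint : ∫ t in (0)..m / k, (m - k * t) = m ^ 2 / (2 * k) := by
    rw [intervalIntegral.integral_sub intervalIntegrable_const
      (intervalIntegral.intervalIntegrable_id.const_mul k), intervalIntegral.integral_const,
      intervalIntegral.integral_const_mul, integral_id]
    simp only [smul_eq_mul, sub_zero, zero_pow two_ne_zero]
    field_simp
    ring
  calc ENNReal.ofReal (m ^ 2 / (2 * k))
      = ∫⁻ t in Ioc 0 (m / k), ENNReal.ofReal (m - k * t) := by
        rw [← hint, intervalIntegral.integral_of_le hmk, ofReal_integral_eq_lintegral_ofReal]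
        · exact (continuous_const.sub (continuous_const.mul continuous_id)).integrableOn_Ioc
        · refine (ae_restrict_iff' measurableSet_Ioc).2 (ae_of_all _ fun t ht => ?_)
          have := (le_div_iff₀' hk).1 ht.2
          simp only [Pi.zero_apply]
          linarith
    _ ≤ ∫⁻ t in Ioi 0, ENNReal.ofReal (m - k * t) := lintegral_mono_set Ioc_subset_Ioi_self

theorem sq_div_le_setIntegral_of_measure_le {α : Type*} [MeasurableSpace α] {μ : Measure α}
    {S : Set α} {f : α → ℝ} {k : ℝ} (hk : 0 < k) (hS : MeasurableSet S)
    (hfi : IntegrableOn f S μ) (hf : ∀ x ∈ S, 0 ≤ f x)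
    (hlevel : ∀ t > 0, μ {x ∈ S | f x ≤ t} ≤ ENNReal.ofReal (k * t)) :
    (μ S).toReal ^ 2 / (2 * k) ≤ ∫ x in S, f x ∂μ := by
  have hf_ae : 0 ≤ᵐ[μ.restrict S] f := (ae_restrict_iff' hS).2 (ae_of_all _ hf)
  have hsuper : ∀ t ∈ Ioi (0 : ℝ),
      ENNReal.ofReal ((μ S).toReal - k * t) ≤ μ.restrict S {x | t < f x} := fun t ht =>
    calc ENNReal.ofReal ((μ S).toReal - k * t)
        = ENNReal.ofReal (μ S).toReal - ENNReal.ofReal (k * t) :=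
          ENNReal.ofReal_sub _ (mul_nonneg hk.le (le_of_lt ht))
      _ ≤ μ S - μ {x ∈ S | f x ≤ t} := tsub_le_tsub ENNReal.ofReal_toReal_le (hlevel t ht)
      _ ≤ μ (S \ {x ∈ S | f x ≤ t}) := le_measure_sdiff
      _ ≤ μ.restrict S {x | t < f x} := by
          rw [Measure.restrict_apply' hS]
          exact measure_mono fun x hx => ⟨not_le.1 fun h => hx.2 ⟨hx.1, h⟩, hx.1⟩
  rw [← ENNReal.ofReal_le_ofReal_iff (setIntegral_nonneg hS hf),
    ofReal_integral_eq_lintegral_ofReal hfi hf_ae,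
    lintegral_eq_lintegral_meas_lt _ hf_ae hfi.aemeasurable]
  exact (ofReal_sq_div_le_lintegral_ofReal_sub_mul ENNReal.toReal_nonneg hk).trans
    (setLIntegral_mono' measurableSet_Ioi hsuper)

theorem setIntegral_sub_setIntegral_eq_of_measure_sdiff_eq {α : Type*} [MeasurableSpace α]
    {μ : Measure α} {A B : Set α} {f : α → ℝ} (hA : MeasurableSet A) (hB : MeasurableSet B)
    (hfA : IntegrableOn f A μ) (hfB : IntegrableOn f B μ)
    (hAB : μ (A \ B) = μ (B \ A)) (hfin : μ (A \ B) ≠ ⊤) (c : ℝ) :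
    (∫ x in A, f x ∂μ) - ∫ x in B, f x ∂μ =
      (∫ x in A \ B, (f x - c) ∂μ) + ∫ x in B \ A, (c - f x) ∂μ := by
  have hsplitA := integral_inter_add_sdiff hB hfA
  have hsplitB := integral_inter_add_sdiff hA hfB
  rw [inter_comm] at hsplitB
  rw [integral_sub (hfA.mono_set sdiff_subset) (integrableOn_const hfin),
    integral_sub (integrableOn_const (C := c) (hAB ▸ hfin)) (hfB.mono_set sdiff_subset),
    setIntegral_const, setIntegral_const, measureReal_def, measureReal_def, hAB]
  linarith

theorem sq_div_le_setIntegral_sq_norm_sub {S : Set E2} (hS : MeasurableSet S)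
    (hSfin : volume S ≠ ⊤) (hi : IntegrableOn (fun x => ‖x‖ ^ 2) S) {c : ℝ}
    (hc : ∀ x ∈ S, c ≤ ‖x‖ ^ 2) :
    (volume S).toReal ^ 2 / (2 * π) ≤ ∫ x in S, (‖x‖ ^ 2 - c) := by
  refine sq_div_le_setIntegral_of_measure_le pi_pos hS (hi.sub (integrableOn_const hSfin))
    (fun x hx => sub_nonneg.2 (hc x hx)) fun t _ => ?_
  calc volume {x ∈ S | ‖x‖ ^ 2 - c ≤ t}
      ≤ volume {x : E2 | ‖x‖ ^ 2 ∈ Icc c (c + t)} :=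
        measure_mono fun x hx => ⟨hc x hx.1, by linarith [hx.2]⟩
    _ ≤ ENNReal.ofReal (π * t) := by
        simpa using EuclideanSpace.volume_sq_norm_mem_Icc_le c (c + t)

theorem sq_div_le_setIntegral_sub_sq_norm {S : Set E2} (hS : MeasurableSet S)
    (hSfin : volume S ≠ ⊤) (hi : IntegrableOn (fun x => ‖x‖ ^ 2) S) {c : ℝ}
    (hc : ∀ x ∈ S, ‖x‖ ^ 2 ≤ c) :
    (volume S).toReal ^ 2 / (2 * π) ≤ ∫ x in S, (c - ‖x‖ ^ 2) := by
  refine sq_div_le_setIntegral_of_measure_le pi_pos hS ((integrableOn_const hSfin).sub hi)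
    (fun x hx => sub_nonneg.2 (hc x hx)) fun t _ => ?_
  calc volume {x ∈ S | c - ‖x‖ ^ 2 ≤ t}
      ≤ volume {x : E2 | ‖x‖ ^ 2 ∈ Icc (c - t) c} :=
        measure_mono fun x hx => ⟨by linarith [hx.2], hc x hx.1⟩
    _ ≤ ENNReal.ofReal (π * t) := by
        simpa using EuclideanSpace.volume_sq_norm_mem_Icc_le (c - t) c

/-- for a set `A` of finite measure, with `A* = B_s` the
origin-centered disk of the same measure,
`J(1_A) - J(1_{A*}) ≥ (1/(4π)) |A △ A*|²`. -/
theorem set_rearrangement_estimate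
    (A : Set E2) (hA : MeasurableSet A) (hfin : volume A < ⊤)
    (hint : IntegrableOn (fun x : E2 => ‖x‖ ^ 2) A)
    (s : ℝ) (hs : s = Real.sqrt ((volume A).toReal / Real.pi)) :
    1 / (4 * Real.pi) *
        ((volume (symmDiff A (Metric.ball (0 : E2) s))).toReal) ^ 2 ≤
      (∫ x in A, ‖x‖ ^ 2) - ∫ x in Metric.ball (0 : E2) s, ‖x‖ ^ 2 := by
  have hs0 : 0 ≤ s := hs ▸ sqrt_nonneg _
  have hvol : volume (ball (0 : E2) s) = volume A := by
    rw [hs, EuclideanSpace.volume_ball_fin_two_sqrt, mul_div_cancel₀ _ pi_pos.ne',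
      ENNReal.ofReal_toReal hfin.ne]
  set B := ball (0 : E2) s
  have hBm : MeasurableSet B := measurableSet_ball
  have hAB : volume (A \ B) = volume (B \ A) :=
    measure_sdiff_symm hA.nullMeasurableSet hBm.nullMeasurableSet hvol.symm
      (measure_ne_top_of_subset inter_subset_left hfin.ne)
  have hABfin : volume (A \ B) ≠ ⊤ := measure_ne_top_of_subset sdiff_subset hfin.ne
  have hIB : IntegrableOn (fun x : E2 => ‖x‖ ^ 2) B :=
    (continuous_norm.pow 2).continuousOn.integrableOn_compact (isCompact_closedBall 0 s)
      |>.mono_set ball_subset_closedBall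
  have houter := sq_div_le_setIntegral_sq_norm_sub (hA.diff hBm) hABfin
    (hint.mono_set sdiff_subset) (c := s ^ 2) fun x hx => by
      have : s ≤ ‖x‖ := by simpa [B] using hx.2
      nlinarith
  have hinner := sq_div_le_setIntegral_sub_sq_norm (hBm.diff hA) (hAB ▸ hABfin)
    (hIB.mono_set sdiff_subset) (c := s ^ 2) fun x hx => by
      have : ‖x‖ < s := by simpa [B] using hx.1
      nlinarith [norm_nonneg x]
  set m := (volume (A \ B)).toReal
  have hBA : (volume (B \ A)).toReal = m := by rw [← hAB]
  rw [hBA] at hinner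
  rw [measure_symmDiff_eq hA.nullMeasurableSet hBm.nullMeasurableSet,
    ENNReal.toReal_add hABfin (hAB ▸ hABfin), hBA,
    setIntegral_sub_setIntegral_eq_of_measure_sdiff_eq hA hBm hint hIB hAB hABfin (s ^ 2)]
  calc 1 / (4 * π) * (m + m) ^ 2 = m ^ 2 / (2 * π) + m ^ 2 / (2 * π) := by
        field_simp
        ring
    _ ≤ _ := add_le_add houter hinner
end
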